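/- arXiv:2502.19377 — 3 statements merged into one kernel-verified Lean document; each statement's English description precedes it below -/
import Mathlib

section
/- Let E be a finite set, let y ⊆ E, and let E₁, …, E_m be finitely many subsets of E such that each E_i contains at least one element not belonging to y. Then for every sequence of score vectors sₙ : E → ℝ such that sₙ(e) → +∞ for every e ∈ y and sₙ(e) → −∞ for every e ∉ y, the products ∏_{i=1}^{m} ( 1 − ( ∑_{e ∈ y} (1 − σ(sₙ(e))) ) / ( ∑_{e ∈ E_i} (1 − σ(sₙ(e))) ) ) converge to 1 as n → ∞. (This is the success probability of Karger's algorithm guided by scores s, as in Theorem 1: the i-th factor is the probability that no edge of the optimal k-cut y is contracted at contraction step i, where E_i is the set of edges remaining at step i.) -/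
open Filter Finset

/-- The logistic sigmoid function `σ(x) = exp x / (1 + exp x)`. -/
noncomputable def sigmoid (x : ℝ) : ℝ := Real.exp x / (1 + Real.exp x)

lemma sigmoid_tendsto_one : Tendsto sigmoid atTop (nhds 1) := by
  have h : sigmoid = fun x => 1 - (1 + Real.exp x)⁻¹ := by
    funext x
    have hx : (1 : ℝ) + Real.exp x ≠ 0 := by positivity
    rw [sigmoid, eq_sub_iff_add_eq, inv_eq_one_div, ← add_div, div_eq_one_iff_eq hx, add_comm]
  rw [h]
  have : Tendsto (fun x => (1 + Real.exp x)⁻¹) atTop (nhds 0) := by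
    apply Tendsto.inv_tendsto_atTop
    exact tendsto_atTop_add_const_left _ 1 Real.tendsto_exp_atTop
  simpa using Tendsto.const_sub (1:ℝ) this

lemma sigmoid_tendsto_zero : Tendsto sigmoid atBot (nhds 0) := by
  have h1 : Tendsto (fun x => Real.exp x) atBot (nhds 0) := Real.tendsto_exp_atBot
  have h2 : Tendsto (fun x => 1 + Real.exp x) atBot (nhds 1) := by
    simpa using tendsto_const_nhds.add h1
  have := h1.div h2 (by norm_num)
  rwa [zero_div] at this

/-- **Theorem 1 (unweighted).** Let `E` be a finite set, `y ⊆ E`, and `E₁, …, E_m`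
subsets of `E`, each containing at least one element not in `y`. If the scores
`sₙ(e) → +∞` for `e ∈ y` and `sₙ(e) → −∞` for `e ∉ y`, then the success probability
of Karger's algorithm guided by `sₙ`,
`∏ i, (1 − (∑_{e ∈ y} (1 − σ(sₙ e))) / (∑ e ∈ E_i} (1 − σ(sₙ e))))`, tends to `1`. -/
theorem karger_guided_success_prob_tendsto_one
    {E : Type*} [Fintype E] [DecidableEq E]
    (y : Finset E) {m : ℕ} (Ei : Fin m → Finset E)
    (hEi : ∀ i : Fin m, ∃ e ∈ Ei i, e ∉ y)
    (s : ℕ → E → ℝ)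
    (hy : ∀ e ∈ y, Tendsto (fun n => s n e) atTop atTop)
    (hy' : ∀ e ∉ y, Tendsto (fun n => s n e) atTop atBot) :
    Tendsto
      (fun n => ∏ i : Fin m,
        (1 - (∑ e ∈ y, (1 - sigmoid (s n e))) / (∑ e ∈ Ei i, (1 - sigmoid (s n e)))))
      atTop (nhds 1) := by
  -- pointwise limit of each summand
  have hterm : ∀ e : E, Tendsto (fun n => 1 - sigmoid (s n e)) atTop
      (nhds (if e ∈ y then 0 else 1)) := by
    intro e
    by_cases he : e ∈ y
    · simp only [he, if_true]
      have := sigmoid_tendsto_one.comp (hy e he)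
      simpa using Tendsto.const_sub (1:ℝ) this
    · simp only [he, if_false]
      have := sigmoid_tendsto_zero.comp (hy' e he)
      simpa using Tendsto.const_sub (1:ℝ) this
  -- numerator tends to 0
  have hnum : Tendsto (fun n => ∑ e ∈ y, (1 - sigmoid (s n e))) atTop (nhds 0) := by
    have := tendsto_finset_sum y (fun e _ => hterm e)
    have hsum : (∑ e ∈ y, (if e ∈ y then (0:ℝ) else 1)) = 0 := by
      apply Finset.sum_eq_zero; intro e he; simp [he]
    rwa [hsum] at this
  have key : ∀ i : Fin m,
      Tendsto (fun n => 1 - (∑ e ∈ y, (1 - sigmoid (s n e))) /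
        (∑ e ∈ Ei i, (1 - sigmoid (s n e)))) atTop (nhds 1) := by
    intro i
    have hden : Tendsto (fun n => ∑ e ∈ Ei i, (1 - sigmoid (s n e))) atTop
        (nhds (∑ e ∈ Ei i, (if e ∈ y then (0:ℝ) else 1))) :=
      tendsto_finset_sum _ (fun e _ => hterm e)
    have hLpos : (0:ℝ) < ∑ e ∈ Ei i, (if e ∈ y then (0:ℝ) else 1) := by
      obtain ⟨e, heE, hey⟩ := hEi i
      have h1 : ∀ f ∈ Ei i, (0:ℝ) ≤ (if f ∈ y then (0:ℝ) else 1) := by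
        intro f _; split <;> norm_num
      refine Finset.sum_pos' h1 ⟨e, heE, ?_⟩
      simp [hey]
    have hdiv := hnum.div hden (ne_of_gt hLpos)
    rw [zero_div] at hdiv
    simpa using Tendsto.const_sub (1:ℝ) hdiv
  have := tendsto_finset_prod (Finset.univ : Finset (Fin m))
    (fun i _ => key i)
  simpa using this
end

section
/- Let E be a finite set, let w : E → ℝ satisfy w(e) > 0 for every e ∈ E, let y ⊆ E, and let E₁, …, E_m be finitely many subsets of E such that each E_i contains at least one element not belonging to y. Then for every sequence of score vectors sₙ : E → ℝ such that sₙ(e) → +∞ for every e ∈ y and sₙ(e) → −∞ for every e ∉ y, the products ∏_{i=1}^{m} ( 1 − ( ∑_{e ∈ y} w(e)·(1 − σ(sₙ(e))) ) / ( ∑_{e ∈ E_i} w(e)·(1 − σ(sₙ(e))) ) ) converge to 1 as n → ∞. (This is the extension of Theorem 1 to weighted graphs: the i-th factor is the probability that no edge of the optimal cut y is contracted at contraction step i of the weighted Karger algorithm guided by scores s.) -/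
open Filter Finset

lemma sigmoid_tendsto_one_s1 {f : ℕ → ℝ} (hf : Tendsto f atTop atTop) :
    Tendsto (fun n => sigmoid (f n)) atTop (nhds 1) := by
  have h1 : Tendsto (fun n => 1 + Real.exp (f n)) atTop atTop :=
    tendsto_atTop_add_const_left _ 1 (Real.tendsto_exp_atTop.comp hf)
  have h2 : Tendsto (fun n => (1 + Real.exp (f n))⁻¹) atTop (nhds 0) :=
    h1.inv_tendsto_atTop
  have heq : ∀ n, sigmoid (f n) = 1 - (1 + Real.exp (f n))⁻¹ := by
    intro n
    have hpos : (0:ℝ) < 1 + Real.exp (f n) := by positivity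
    unfold sigmoid
    field_simp
    ring
  simp_rw [heq]
  simpa using tendsto_const_nhds.sub h2

lemma sigmoid_tendsto_zero_s1 {f : ℕ → ℝ} (hf : Tendsto f atTop atBot) :
    Tendsto (fun n => sigmoid (f n)) atTop (nhds 0) := by
  have he : Tendsto (fun n => Real.exp (f n)) atTop (nhds 0) :=
    Real.tendsto_exp_atBot.comp hf
  have hd : Tendsto (fun n => 1 + Real.exp (f n)) atTop (nhds 1) := by
    simpa using tendsto_const_nhds.add he
  have := he.div hd one_ne_zero
  simpa only [sigmoid, zero_div, Pi.div_def] using this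

/-- **Theorem 1 (weighted).** Let `E` be a finite set with positive weights `w`,
`y ⊆ E`, and `E₁, …, E_m` subsets of `E`, each containing at least one element not
in `y`. If the scores `sₙ(e) → +∞` for `e ∈ y` and `sₙ(e) → −∞` for `e ∉ y`, then
the success probability of the weighted Karger algorithm guided by `sₙ`,
`∏ i, (1 − (∑_{e ∈ y} w e * (1 − σ(sₙ e))) / (∑_{e ∈ E_i} w e * (1 − σ(sₙ e))))`,
tends to `1`. -/
theorem weighted_karger_guided_success_prob_tendsto_one
    {E : Type*} [Fintype E] [DecidableEq E]
    (w : E → ℝ) (hw : ∀ e, 0 < w e)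
    (y : Finset E) {m : ℕ} (Ei : Fin m → Finset E)
    (hEi : ∀ i : Fin m, ∃ e ∈ Ei i, e ∉ y)
    (s : ℕ → E → ℝ)
    (hy : ∀ e ∈ y, Tendsto (fun n => s n e) atTop atTop)
    (hy' : ∀ e ∉ y, Tendsto (fun n => s n e) atTop atBot) :
    Tendsto
      (fun n => ∏ i : Fin m,
        (1 - (∑ e ∈ y, w e * (1 - sigmoid (s n e))) /
          (∑ e ∈ Ei i, w e * (1 - sigmoid (s n e)))))
      atTop (nhds 1) := by
  set ℓ : E → ℝ := fun e => if e ∈ y then 0 else w e with hℓ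
  have hterm : ∀ e : E, Tendsto (fun n => w e * (1 - sigmoid (s n e))) atTop (nhds (ℓ e)) := by
    intro e
    by_cases he : e ∈ y
    · have := sigmoid_tendsto_one_s1 (hy e he)
      have h := (tendsto_const_nhds (x := (1:ℝ)) (f := atTop)).sub this
      have h2 := (tendsto_const_nhds (x := w e) (f := atTop)).mul h
      simpa [hℓ, he] using h2
    · have := sigmoid_tendsto_zero_s1 (hy' e he)
      have h := (tendsto_const_nhds (x := (1:ℝ)) (f := atTop)).sub this
      have h2 := (tendsto_const_nhds (x := w e) (f := atTop)).mul h
      simpa [hℓ, he] using h2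
  have hnum : Tendsto (fun n => ∑ e ∈ y, w e * (1 - sigmoid (s n e))) atTop (nhds 0) := by
    have := tendsto_finset_sum y (fun e _ => hterm e)
    have hzero : (∑ e ∈ y, ℓ e) = 0 := by
      apply Finset.sum_eq_zero
      intro e he; simp [hℓ, he]
    rwa [hzero] at this
  have hfac : ∀ i : Fin m,
      Tendsto (fun n => 1 - (∑ e ∈ y, w e * (1 - sigmoid (s n e))) /
        (∑ e ∈ Ei i, w e * (1 - sigmoid (s n e)))) atTop (nhds 1) := by
    intro i
    have hden : Tendsto (fun n => ∑ e ∈ Ei i, w e * (1 - sigmoid (s n e))) atTop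
        (nhds (∑ e ∈ Ei i, ℓ e)) := tendsto_finset_sum _ (fun e _ => hterm e)
    have hLpos : 0 < ∑ e ∈ Ei i, ℓ e := by
      obtain ⟨e₀, he₀, he₀y⟩ := hEi i
      apply Finset.sum_pos'
      · intro e _
        by_cases he : e ∈ y <;> simp [hℓ, he, (hw e).le]
      · exact ⟨e₀, he₀, by simp [hℓ, he₀y, hw e₀]⟩
    have hratio := hnum.div hden (ne_of_gt hLpos)
    rw [zero_div] at hratio
    simpa using (tendsto_const_nhds (x := (1:ℝ)) (f := atTop)).sub hratio
  have := tendsto_finset_prod (Finset.univ : Finset (Fin m))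
    (fun i _ => hfac i)
  simpa using this
end

section
/- Let V be a finite type, let G be the complete simple graph on V, and let w assign a strictly positive real weight to every edge of G. Let C be the collection of edge sets of Hamiltonian cycles of G, assume C is nonempty, and let y ∈ C be the edge set of a Hamiltonian cycle of minimum total weight, i.e. ∑_{e ∈ y} w(e) ≤ ∑_{e ∈ y'} w(e) for every y' ∈ C. Let α ∈ ℝ be arbitrary. Then for every sequence of score vectors sₙ (assigning a real score to each edge of G) such that sₙ(e) → +∞ for every edge e ∈ y and sₙ(e) → −∞ for every edge e ∉ y, there exists N such that for all n ≥ N: every edge set y' ∈ C of a Hamiltonian cycle satisfying ∑_{e ∈ y'} w(e)·(1 − σ(sₙ(e))) ≤ α · ∑_{e ∈ y} w(e)·(1 − σ(sₙ(e))) must equal y. (This is the mathematical content of the Corollary: a probabilistic insertion algorithm for the TSP, which has relative approximation factor α = ⌈log₂|V|⌉ + 1, when run on the graph with modified edge weights w(e)·(1 − σ(s(e))), outputs the optimal tour y with probability tending to 1 as σ(s) → y.) -/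
open Filter Finset

/-- The collection of edge sets of Hamiltonian cycles of a simple graph. -/
def hamiltonianCycleEdgeSets {V : Type*} [Fintype V] [DecidableEq V]
    (G : SimpleGraph V) : Set (Finset (Sym2 V)) :=
  {F | ∃ (v : V) (p : G.Walk v v), p.IsHamiltonianCycle ∧ F = p.edges.toFinset}

lemma sigmoid_lt_one (x : ℝ) : sigmoid x < 1 := by
  unfold sigmoid
  rw [div_lt_one (by positivity)]
  linarith

lemma one_sub_sigmoid (x : ℝ) : 1 - sigmoid x = (1 + Real.exp x)⁻¹ := by
  unfold sigmoid
  have h : (1 : ℝ) + Real.exp x ≠ 0 := by positivity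
  field_simp
  ring

lemma tendsto_one_sub_sigmoid_atTop :
    Tendsto (fun x => 1 - sigmoid x) atTop (nhds 0) := by
  simp only [one_sub_sigmoid]
  exact (tendsto_atTop_add_const_left _ 1 Real.tendsto_exp_atTop).inv_tendsto_atTop

lemma tendsto_one_sub_sigmoid_atBot :
    Tendsto (fun x => 1 - sigmoid x) atBot (nhds 1) := by
  simp only [one_sub_sigmoid]
  have h : Tendsto (fun x : ℝ => 1 + Real.exp x) atBot (nhds 1) := by
    simpa using (tendsto_const_nhds.add Real.tendsto_exp_atBot)
  simpa using h.inv₀ (by norm_num)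

/-- **Corollary (TSP).** On the complete graph on a finite vertex set `V` with
strictly positive edge weights `w`, let `y` be the edge set of an optimal (minimum
total weight) Hamiltonian cycle and `α ∈ ℝ` arbitrary. If the scores `sₙ(e) → +∞`
for edges `e ∈ y` and `sₙ(e) → −∞` for edges `e ∉ y`, then eventually every
Hamiltonian cycle edge set `y'` whose modified length
`∑_{e ∈ y'} w e * (1 − σ(sₙ e))` satisfies the relative error bound with factor `α`
(relative to the modified length of `y`) must equal `y`. -/
theorem tsp_insertion_eventually_optimal
    {V : Type*} [Fintype V] [DecidableEq V]
    (w : Sym2 V → ℝ)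
    (hw : ∀ e ∈ (SimpleGraph.completeGraph V).edgeSet, 0 < w e)
    (hC : (hamiltonianCycleEdgeSets (SimpleGraph.completeGraph V)).Nonempty)
    (y : Finset (Sym2 V)) (hy : y ∈ hamiltonianCycleEdgeSets (SimpleGraph.completeGraph V))
    (hopt : ∀ y' ∈ hamiltonianCycleEdgeSets (SimpleGraph.completeGraph V),
      ∑ e ∈ y, w e ≤ ∑ e ∈ y', w e)
    (α : ℝ)
    (s : ℕ → Sym2 V → ℝ)
    (hyTop : ∀ e ∈ y, Tendsto (fun n => s n e) atTop atTop)
    (hyBot : ∀ e ∈ (SimpleGraph.completeGraph V).edgeSet, e ∉ y →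
      Tendsto (fun n => s n e) atTop atBot) :
    ∃ N : ℕ, ∀ n ≥ N, ∀ y' ∈ hamiltonianCycleEdgeSets (SimpleGraph.completeGraph V),
      (∑ e ∈ y', w e * (1 - sigmoid (s n e))) ≤
          α * ∑ e ∈ y, w e * (1 - sigmoid (s n e)) →
        y' = y := by
  classical
  -- every edge of a Hamiltonian cycle edge set lies in the edge set of the graph
  have hsub : ∀ F ∈ hamiltonianCycleEdgeSets (SimpleGraph.completeGraph V),
      ∀ e ∈ F, e ∈ (SimpleGraph.completeGraph V).edgeSet := by
    rintro F ⟨v, p, hp, rfl⟩ e he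
    exact p.edges_subset_edgeSet (List.mem_toFinset.mp he)
  set S : Finset (Sym2 V) := (SimpleGraph.completeGraph V).edgeFinset \ y with hS
  set t : ℝ := if h : S.Nonempty then (S.inf' h w) / 2 else 1 with ht
  have hwS : ∀ e ∈ S, 0 < w e := by
    intro e he
    exact hw e (SimpleGraph.mem_edgeFinset.mp (Finset.mem_sdiff.mp he).1)
  have ht0 : 0 < t := by
    rw [ht]
    split_ifs with h
    · obtain ⟨e, he, heq⟩ := Finset.exists_mem_eq_inf' h w
      rw [heq]
      linarith [hwS e he]
    · exact one_pos
  have htle : ∀ e ∈ S, t < w e := by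
    intro e he
    rw [ht]
    have hne : S.Nonempty := ⟨e, he⟩
    rw [dif_pos hne]
    have := Finset.inf'_le w he
    linarith [hwS e he]
  -- the modified length of y tends to 0
  have h1 : Tendsto (fun n => α * ∑ e ∈ y, w e * (1 - sigmoid (s n e)))
      atTop (nhds 0) := by
    have hsum : Tendsto (fun n => ∑ e ∈ y, w e * (1 - sigmoid (s n e)))
        atTop (nhds 0) := by
      have : Tendsto (fun n => ∑ e ∈ y, w e * (1 - sigmoid (s n e)))
          atTop (nhds (∑ e ∈ y, w e * 0)) := by
        apply tendsto_finset_sum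
        intro e he
        exact (tendsto_const_nhds.mul
          (tendsto_one_sub_sigmoid_atTop.comp (hyTop e he)))
      simpa using this
    simpa using hsum.const_mul α
  have hev1 : ∀ᶠ n in atTop,
      α * ∑ e ∈ y, w e * (1 - sigmoid (s n e)) < t :=
    h1.eventually (gt_mem_nhds ht0)
  have hev2 : ∀ᶠ n in atTop, ∀ e ∈ S, t < w e * (1 - sigmoid (s n e)) := by
    rw [Filter.eventually_all_finset]
    intro e he
    have hterm : Tendsto (fun n => w e * (1 - sigmoid (s n e))) atTop
        (nhds (w e)) := by
      have hb := tendsto_one_sub_sigmoid_atBot.comp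
        (hyBot e (SimpleGraph.mem_edgeFinset.mp (Finset.mem_sdiff.mp he).1)
          (Finset.mem_sdiff.mp he).2)
      have := (tendsto_const_nhds (x := w e) (f := (atTop : Filter ℕ))).mul hb
      simpa using this
    exact hterm.eventually (lt_mem_nhds (htle e he))
  obtain ⟨N, hN⟩ := Filter.eventually_atTop.mp (hev1.and hev2)
  refine ⟨N, fun n hn y' hy' hle => ?_⟩
  obtain ⟨hn1, hn2⟩ := hN n hn
  by_contra hne
  by_cases hcase : y' ⊆ y
  · -- strict subset contradicts optimality
    obtain ⟨e₀, he₀y, he₀y'⟩ := Finset.exists_of_ssubset ⟨hcase, fun h => hne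
      (Finset.Subset.antisymm hcase h)⟩
    have : ∑ e ∈ y', w e < ∑ e ∈ y, w e := by
      apply Finset.sum_lt_sum_of_subset hcase he₀y he₀y'
        (hw e₀ (hsub y hy e₀ he₀y))
      intro j hj _
      exact le_of_lt (hw j (hsub y hy j hj))
    linarith [hopt y' hy']
  · obtain ⟨e₀, he₀y', he₀y⟩ := Finset.not_subset.mp hcase
    have he₀S : e₀ ∈ S := Finset.mem_sdiff.mpr
      ⟨SimpleGraph.mem_edgeFinset.mpr (hsub y' hy' e₀ he₀y'), he₀y⟩
    have hterm : t < w e₀ * (1 - sigmoid (s n e₀)) := hn2 e₀ he₀S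
    have hbig : w e₀ * (1 - sigmoid (s n e₀)) ≤
        ∑ e ∈ y', w e * (1 - sigmoid (s n e)) := by
      apply Finset.single_le_sum (fun e he => ?_) he₀y'
      have := hw e (hsub y' hy' e he)
      have := sigmoid_lt_one (s n e)
      nlinarith
    linarith
end
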